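/- Let G be a weighted directed graph on vertex set V = {1,…,n} and let M_4 be the simple bi-directional triangle motif with vertices {1,2,3} and edge set E_M = {(1,2),(2,1),(2,3),(3,2),(1,3),(3,1)}. Then the functional (equivalently, structural) motif adjacency matrix of M_4 in G satisfies M = (1/6)·[ J_d ∘ (J_d G_d) + J_d ∘ (G_d J_d) + G_d ∘ (J_d J_d) ]. -/

import Mathlib

/-!
Since `M₄` is the complete digraph on three vertices, an isomorphism onto `H` forces `E_H` to
consist of all ordered pairs of distinct vertices of `V_H`. Hence functional and structural
instances coincide, and the instances with anchored pair `{i, j}` are the triples `{i, j, k}`,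
`k ∉ {i, j}`, all of whose pairs are double edges. Such a triple contributes
`J_d(i,j) J_d(i,k) J_d(k,j)` times its total weight, and writing `G_d = J_d ∘ (G + Gᵀ)` shows that
the `k`-th term of the three Hadamard products is exactly this contribution.
-/

open scoped Classical BigOperators Matrix

noncomputable section

/-- A motif on `m` vertices: a weakly connected loopless directed graph on the vertex set
`Fin m`, given by its edge set. -/
structure Motif (m : ℕ) where
  edges : Finset (Fin m × Fin m)
  irrefl : ∀ e ∈ edges, e.1 ≠ e.2
  connected : (SimpleGraph.fromRel (fun u v => (u, v) ∈ edges)).Connected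

variable {n m : ℕ}

/-- Edge set of the weighted directed graph with weight matrix `G`:
`E = {(i,j) : i ≠ j and G i j > 0}`. -/
def edgeFinset (G : Matrix (Fin n) (Fin n) ℝ) : Finset (Fin n × Fin n) :=
  Finset.univ.filter fun p => p.1 ≠ p.2 ∧ 0 < G p.1 p.2

/-- Directed-edge indicator matrix `J`. -/
def Jmat (G : Matrix (Fin n) (Fin n) ℝ) : Matrix (Fin n) (Fin n) ℝ :=
  fun i j => if (i, j) ∈ edgeFinset G then 1 else 0

/-- Single-edge indicator matrix `J_s`. -/
def Jsmat (G : Matrix (Fin n) (Fin n) ℝ) : Matrix (Fin n) (Fin n) ℝ :=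
  fun i j => if (i, j) ∈ edgeFinset G ∧ (j, i) ∉ edgeFinset G then 1 else 0

/-- Double-edge indicator matrix `J_d`. -/
def Jdmat (G : Matrix (Fin n) (Fin n) ℝ) : Matrix (Fin n) (Fin n) ℝ :=
  fun i j => if (i, j) ∈ edgeFinset G ∧ (j, i) ∈ edgeFinset G then 1 else 0

/-- Missing-edge indicator matrix `J_0`. -/
def J0mat (G : Matrix (Fin n) (Fin n) ℝ) : Matrix (Fin n) (Fin n) ℝ :=
  fun i j => if (i, j) ∉ edgeFinset G ∧ (j, i) ∉ edgeFinset G ∧ i ≠ j then 1 else 0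

/-- Vertex-distinct indicator matrix `J_n`. -/
def Jnmat (n : ℕ) : Matrix (Fin n) (Fin n) ℝ :=
  fun i j => if i ≠ j then 1 else 0

/-- Single-edge weighted matrix `G_s`. -/
def Gsmat (G : Matrix (Fin n) (Fin n) ℝ) : Matrix (Fin n) (Fin n) ℝ :=
  fun i j => if (i, j) ∈ edgeFinset G ∧ (j, i) ∉ edgeFinset G then G i j else 0

/-- Double-edge weighted matrix `G_d`. -/
def Gdmat (G : Matrix (Fin n) (Fin n) ℝ) : Matrix (Fin n) (Fin n) ℝ :=
  fun i j => if (i, j) ∈ edgeFinset G ∧ (j, i) ∈ edgeFinset G then G i j + G j i else 0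

/-- Entrywise (Hadamard) product of matrices. -/
def had (A B : Matrix (Fin n) (Fin n) ℝ) : Matrix (Fin n) (Fin n) ℝ :=
  fun i j => A i j * B i j

/-- Well-formedness of a candidate subgraph `H = (V_H, E_H)` of a graph on `Fin n`:
each edge joins two distinct vertices of `H`. -/
def IsGraphPair (H : Finset (Fin n) × Finset (Fin n × Fin n)) : Prop :=
  ∀ e ∈ H.2, e.1 ∈ H.1 ∧ e.2 ∈ H.1 ∧ e.1 ≠ e.2

/-- `φ` is an isomorphism from the motif `M` onto the graph `H = (V_H, E_H)`. -/
def IsIso (M : Motif m) (H : Finset (Fin n) × Finset (Fin n × Fin n))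
    (φ : Fin m → Fin n) : Prop :=
  Function.Injective φ ∧ Finset.image φ Finset.univ = H.1 ∧
    ∀ u v : Fin m, (u, v) ∈ M.edges ↔ (φ u, φ v) ∈ H.2

/-- `H` is a functional instance of motif `M` in the graph with weight matrix `G`,
i.e. `M ≅ H ≤ G`. -/
def IsFuncInstance (M : Motif m) (G : Matrix (Fin n) (Fin n) ℝ)
    (H : Finset (Fin n) × Finset (Fin n × Fin n)) : Prop :=
  IsGraphPair H ∧ H.2 ⊆ edgeFinset G ∧ ∃ φ, IsIso M H φ

/-- `H` is a structural instance of motif `M` in the graph with weight matrix `G`,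
i.e. `M ≅ H < G` (`H` an induced subgraph: `E_H = E ∩ (V_H × V_H)`). -/
def IsStrucInstance (M : Motif m) (G : Matrix (Fin n) (Fin n) ℝ)
    (H : Finset (Fin n) × Finset (Fin n × Fin n)) : Prop :=
  IsGraphPair H ∧
    H.2 = (edgeFinset G).filter (fun e => e.1 ∈ H.1 ∧ e.2 ∈ H.1) ∧
    ∃ φ, IsIso M H φ

/-- `{i, j}` is an anchored pair of the instance `H`: there is an isomorphism `φ` from
`M` to `H` and distinct anchors `a, b ∈ A` with `φ a = i` and `φ b = j`. -/
def AnchoredPair (M : Motif m) (A : Finset (Fin m))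
    (H : Finset (Fin n) × Finset (Fin n × Fin n)) (i j : Fin n) : Prop :=
  ∃ φ, IsIso M H φ ∧ ∃ a ∈ A, ∃ b ∈ A, a ≠ b ∧ φ a = i ∧ φ b = j

/-- The functional motif adjacency matrix of the motif `(M, A)` in the graph
with weight matrix `G`. -/
def mamFunc (M : Motif m) (A : Finset (Fin m)) (G : Matrix (Fin n) (Fin n) ℝ) :
    Matrix (Fin n) (Fin n) ℝ :=
  fun i j => (1 / (M.edges.card : ℝ)) *
    ∑ H : Finset (Fin n) × Finset (Fin n × Fin n),
      if IsFuncInstance M G H ∧ AnchoredPair M A H i j then ∑ e ∈ H.2, G e.1 e.2 else 0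

/-- The structural motif adjacency matrix of the motif `(M, A)` in the graph
with weight matrix `G`. -/
def mamStruc (M : Motif m) (A : Finset (Fin m)) (G : Matrix (Fin n) (Fin n) ℝ) :
    Matrix (Fin n) (Fin n) ℝ :=
  fun i j => (1 / (M.edges.card : ℝ)) *
    ∑ H : Finset (Fin n) × Finset (Fin n × Fin n),
      if IsStrucInstance M G H ∧ AnchoredPair M A H i j then ∑ e ∈ H.2, G e.1 e.2 else 0

lemma offDiag_triple {α : Type*} [DecidableEq α] {i j k : α} (hij : i ≠ j) (hki : k ≠ i)
    (hkj : k ≠ j) :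
    ({i, j, k} : Finset α).offDiag = {(i, j), (j, i), (i, k), (k, i), (j, k), (k, j)} := by
  ext ⟨x, y⟩
  simp only [Finset.mem_offDiag, Finset.mem_insert, Finset.mem_singleton, Prod.mk.injEq]
  grind

lemma sum_finsets_card_three_containing {α β : Type*} [Fintype α] [DecidableEq α]
    [AddCommMonoid β] (f : Finset α → β) (i j : α) :
    ∑ S : Finset α, (if S.card = 3 ∧ i ∈ S ∧ j ∈ S ∧ i ≠ j then f S else 0) =
      ∑ k : α, if k ≠ i ∧ k ≠ j ∧ i ≠ j then f {i, j, k} else 0 := by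
  rw [← Finset.sum_filter, ← Finset.sum_filter]
  refine (Finset.sum_bij (fun k _ => {i, j, k}) ?_ ?_ ?_ fun _ _ => rfl).symm
  · simp only [Finset.mem_filter, Finset.mem_univ, true_and]
    rintro k ⟨hki, hkj, hij⟩
    exact ⟨Finset.card_eq_three.2 ⟨i, j, k, hij, Ne.symm hki, Ne.symm hkj, rfl⟩,
      by simp, by simp, hij⟩
  · simp only [Finset.mem_filter, Finset.mem_univ, true_and]
    rintro k ⟨hki, hkj, -⟩ l - hkl
    have hk : k ∈ ({i, j, l} : Finset α) := hkl ▸ by simp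
    simpa [hki, hkj] using hk
  · simp only [Finset.mem_filter, Finset.mem_univ, true_and, exists_prop]
    rintro S ⟨hS, hi, hj, hij⟩
    have hij_sub : {i, j} ⊆ S := by simp [Finset.insert_subset_iff, hi, hj]
    obtain ⟨k, hk⟩ : ∃ k, S \ {i, j} = {k} := by
      rw [← Finset.card_eq_one, Finset.card_sdiff_of_subset hij_sub, hS, Finset.card_pair hij]
    have hkS : k ∈ S \ {i, j} := hk ▸ Finset.mem_singleton_self k
    simp only [Finset.mem_sdiff, Finset.mem_insert, Finset.mem_singleton, not_or] at hkS
    refine ⟨k, ⟨hkS.2.1, hkS.2.2, hij⟩, ?_⟩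
    rw [← Finset.union_sdiff_of_subset hij_sub, hk]
    ext; simp

lemma mem_edgeFinset {G : Matrix (Fin n) (Fin n) ℝ} {i j : Fin n} :
    (i, j) ∈ edgeFinset G ↔ i ≠ j ∧ 0 < G i j := by
  simp [edgeFinset]

def Motif.IsComplete (M : Motif m) : Prop :=
  ∀ u v, (u, v) ∈ M.edges ↔ u ≠ v

section Instances

variable {M : Motif m} {G : Matrix (Fin n) (Fin n) ℝ}
  {H : Finset (Fin n) × Finset (Fin n × Fin n)} {φ : Fin m → Fin n}

lemma IsIso.card_fst (h : IsIso M H φ) : H.1.card = m := by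
  rw [← h.2.1, Finset.card_image_of_injective _ h.1, Finset.card_univ, Fintype.card_fin]

lemma IsIso.snd_eq_offDiag (hM : M.IsComplete) (hH : IsGraphPair H) (h : IsIso M H φ) :
    H.2 = H.1.offDiag := by
  ext ⟨x, y⟩
  rw [Finset.mem_offDiag]
  refine ⟨hH _, fun ⟨hx, hy, hxy⟩ => ?_⟩
  rw [← h.2.1] at hx hy
  obtain ⟨u, -, rfl⟩ := Finset.mem_image.1 hx
  obtain ⟨v, -, rfl⟩ := Finset.mem_image.1 hy
  exact (h.2.2 u v).1 ((hM u v).2 (ne_of_apply_ne φ hxy))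

lemma exists_isIso_offDiag (hM : M.IsComplete) {S : Finset (Fin n)} (hS : S.card = m) :
    ∃ φ, IsIso M (S, S.offDiag) φ := by
  refine ⟨S.orderEmbOfFin hS, (S.orderEmbOfFin hS).injective,
    S.image_orderEmbOfFin_univ hS, fun u v => ?_⟩
  simp [hM u v]

lemma IsIso.anchoredPair_univ_iff (h : IsIso M H φ) {i j : Fin n} :
    AnchoredPair M Finset.univ H i j ↔ i ≠ j ∧ i ∈ H.1 ∧ j ∈ H.1 := by
  constructor
  · rintro ⟨ψ, hψ, a, -, b, -, hab, rfl, rfl⟩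
    rw [← hψ.2.1]
    exact ⟨hψ.1.ne hab, Finset.mem_image_of_mem _ (Finset.mem_univ a),
      Finset.mem_image_of_mem _ (Finset.mem_univ b)⟩
  · rintro ⟨hij, hi, hj⟩
    rw [← h.2.1] at hi hj
    obtain ⟨a, -, rfl⟩ := Finset.mem_image.1 hi
    obtain ⟨b, -, rfl⟩ := Finset.mem_image.1 hj
    exact ⟨φ, h, a, Finset.mem_univ a, b, Finset.mem_univ b, ne_of_apply_ne φ hij, rfl, rfl⟩

lemma isFuncInstance_iff_of_isComplete (hM : M.IsComplete) :
    IsFuncInstance M G H ↔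
      H.1.card = m ∧ H.1.offDiag ⊆ edgeFinset G ∧ H.2 = H.1.offDiag := by
  constructor
  · rintro ⟨hH, hE, φ, hφ⟩
    have hT := hφ.snd_eq_offDiag hM hH
    exact ⟨hφ.card_fst, hT ▸ hE, hT⟩
  · obtain ⟨S, T⟩ := H
    rintro ⟨hS, hE, rfl : T = S.offDiag⟩
    exact ⟨fun e => Finset.mem_offDiag.1, hE, exists_isIso_offDiag hM hS⟩

lemma isFuncInstance_iff_isStrucInstance (hM : M.IsComplete) :
    IsFuncInstance M G H ↔ IsStrucInstance M G H := by
  constructor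
  · rintro ⟨hH, hE, φ, hφ⟩
    have hT := hφ.snd_eq_offDiag hM hH
    refine ⟨hH, ?_, φ, hφ⟩
    ext ⟨x, y⟩
    rw [Finset.mem_filter, hT, Finset.mem_offDiag]
    exact ⟨fun h => ⟨hE (hT ▸ Finset.mem_offDiag.2 h), h.1, h.2.1⟩,
      fun ⟨hxy, hx, hy⟩ => ⟨hx, hy, (mem_edgeFinset.1 hxy).1⟩⟩
  · rintro ⟨hH, hE, hφ⟩
    exact ⟨hH, hE ▸ Finset.filter_subset _ _, hφ⟩

lemma isFuncInstance_and_anchoredPair_univ_iff (hM : M.IsComplete) {i j : Fin n} :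
    IsFuncInstance M G H ∧ AnchoredPair M Finset.univ H i j ↔
      (H.1.card = m ∧ i ∈ H.1 ∧ j ∈ H.1 ∧ i ≠ j) ∧ H.1.offDiag ⊆ edgeFinset G ∧
        H.2 = H.1.offDiag := by
  constructor
  · rintro ⟨hF, hA⟩
    obtain ⟨φ, hφ⟩ := hF.2.2
    obtain ⟨hij, hi, hj⟩ := hφ.anchoredPair_univ_iff.1 hA
    obtain ⟨hS, hE, hT⟩ := (isFuncInstance_iff_of_isComplete hM).1 hF
    exact ⟨⟨hS, hi, hj, hij⟩, hE, hT⟩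
  · rintro ⟨⟨hS, hi, hj, hij⟩, hE, hT⟩
    have hF := (isFuncInstance_iff_of_isComplete hM).2 ⟨hS, hE, hT⟩
    obtain ⟨φ, hφ⟩ := hF.2.2
    exact ⟨hF, hφ.anchoredPair_univ_iff.2 ⟨hij, hi, hj⟩⟩

end Instances

def cliqueWeight (G : Matrix (Fin n) (Fin n) ℝ) (S : Finset (Fin n)) : ℝ :=
  if S.offDiag ⊆ edgeFinset G then ∑ e ∈ S.offDiag, G e.1 e.2 else 0

section CompleteMotif

variable {M : Motif m} (G : Matrix (Fin n) (Fin n) ℝ)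

lemma mamFunc_apply_of_isComplete (hM : M.IsComplete) (i j : Fin n) :
    mamFunc M Finset.univ G i j = (1 / (M.edges.card : ℝ)) *
      ∑ S : Finset (Fin n),
        if S.card = m ∧ i ∈ S ∧ j ∈ S ∧ i ≠ j then cliqueWeight G S else 0 := by
  simp only [mamFunc, Fintype.sum_prod_type]
  congr 1
  refine Finset.sum_congr rfl fun S _ => ?_
  simp only [isFuncInstance_and_anchoredPair_univ_iff hM]
  by_cases hS : S.card = m ∧ i ∈ S ∧ j ∈ S ∧ i ≠ j
  · by_cases hE : S.offDiag ⊆ edgeFinset G <;> simp [hS, hE, cliqueWeight]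
  · simp [hS]

lemma mamStruc_eq_mamFunc_of_isComplete (hM : M.IsComplete) (A : Finset (Fin m)) :
    mamStruc M A G = mamFunc M A G := by
  ext i j
  simp only [mamStruc, mamFunc, isFuncInstance_iff_isStrucInstance hM]

end CompleteMotif

section Triangle

variable (G : Matrix (Fin n) (Fin n) ℝ)

lemma Jdmat_self (i : Fin n) : Jdmat G i i = 0 := by
  simp [Jdmat, mem_edgeFinset]

lemma Gdmat_eq_Jdmat_mul (i j : Fin n) : Gdmat G i j = Jdmat G i j * (G i j + G j i) := by
  unfold Gdmat Jdmat
  split_ifs <;> ring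

lemma cliqueWeight_triple {i j k : Fin n} (hij : i ≠ j) (hki : k ≠ i) (hkj : k ≠ j) :
    cliqueWeight G {i, j, k} = Jdmat G i j * Jdmat G i k * Jdmat G k j *
      (G i j + G j i + G i k + G k i + G j k + G k j) := by
  have hsum : ∑ e ∈ ({i, j, k} : Finset (Fin n)).offDiag, G e.1 e.2 =
      G i j + G j i + G i k + G k i + G j k + G k j := by
    rw [offDiag_triple hij hki hkj]
    simp [Finset.sum_insert, hij, hki, hkj, hij.symm, hki.symm, hkj.symm]
    ring
  rw [cliqueWeight, hsum, offDiag_triple hij hki hkj]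
  simp only [Finset.insert_subset_iff, Finset.singleton_subset_iff, Jdmat]
  split_ifs <;> simp_all

lemma ite_distinct_cliqueWeight_triple (i j k : Fin n) :
    (if k ≠ i ∧ k ≠ j ∧ i ≠ j then cliqueWeight G {i, j, k} else 0) =
      Jdmat G i j * Jdmat G i k * Jdmat G k j *
        (G i j + G j i + G i k + G k i + G j k + G k j) := by
  split_ifs with h
  · exact cliqueWeight_triple G h.2.2 h.1 h.2.1
  · obtain rfl | rfl | rfl : k = i ∨ k = j ∨ i = j := by tauto
    all_goals simp [Jdmat_self]

lemma had_Jdmat_Gdmat_sum_apply (i j : Fin n) :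
    (had (Jdmat G) (Jdmat G * Gdmat G) + had (Jdmat G) (Gdmat G * Jdmat G) +
        had (Gdmat G) (Jdmat G * Jdmat G)) i j =
      ∑ k, Jdmat G i j * Jdmat G i k * Jdmat G k j *
        (G i j + G j i + G i k + G k i + G j k + G k j) := by
  simp only [Matrix.add_apply, had, Matrix.mul_apply, Finset.mul_sum, ← Finset.sum_add_distrib,
    Gdmat_eq_Jdmat_mul]
  exact Finset.sum_congr rfl fun k _ => by ring

end Triangle

theorem mam_M4_general
    (G : Matrix (Fin n) (Fin n) ℝ)
    (M4 : Motif 3)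
    (hM : M4.edges = {((0 : Fin 3), 1), (1, 0), (1, 2), (2, 1), (0, 2), (2, 0)}) :
    mamFunc M4 Finset.univ G =
      (1 / 6 : ℝ) •
        (had (Jdmat G) (Jdmat G * Gdmat G) + had (Jdmat G) (Gdmat G * Jdmat G) +
          had (Gdmat G) (Jdmat G * Jdmat G)) ∧
    mamStruc M4 Finset.univ G =
      (1 / 6 : ℝ) •
        (had (Jdmat G) (Jdmat G * Gdmat G) + had (Jdmat G) (Gdmat G * Jdmat G) +
          had (Gdmat G) (Jdmat G * Jdmat G)) := by
  have hM4 : M4.IsComplete := by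
    intro u v
    rw [hM]
    revert u v
    decide
  have hcard : (M4.edges.card : ℝ) = 6 := by
    rw [hM]
    rfl
  rw [mamStruc_eq_mamFunc_of_isComplete G hM4, and_self]
  ext i j
  rw [mamFunc_apply_of_isComplete G hM4, sum_finsets_card_three_containing, hcard,
    Matrix.smul_apply, had_Jdmat_Gdmat_sum_apply, smul_eq_mul]
  simp only [ite_distinct_cliqueWeight_triple]

/-- **MAM formula for the bi-directional triangle motif `M₄`.** -/
theorem mam_M4
    (G : Matrix (Fin n) (Fin n) ℝ)
    (hpos : ∀ i j, 0 ≤ G i j) (hdiag : ∀ i, G i i = 0)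
    (M4 : Motif 3)
    (hM : M4.edges = {((0 : Fin 3), 1), (1, 0), (1, 2), (2, 1), (0, 2), (2, 0)}) :
    mamFunc M4 Finset.univ G =
      (1 / 6 : ℝ) •
        (had (Jdmat G) (Jdmat G * Gdmat G) + had (Jdmat G) (Gdmat G * Jdmat G) +
          had (Gdmat G) (Jdmat G * Jdmat G)) ∧
    mamStruc M4 Finset.univ G =
      (1 / 6 : ℝ) •
        (had (Jdmat G) (Jdmat G * Gdmat G) + had (Jdmat G) (Gdmat G * Jdmat G) +
          had (Gdmat G) (Jdmat G * Jdmat G)) :=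
  mam_M4_general G M4 hM
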